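/- Let F ⊆ {−1,+1}^n be nonempty and let d_H(y,F) = min_{w∈F} (1/n) Σ_{t=1}^n 1{w_t ≠ y_t} be the normalized Hamming distance. Then E_ε d_H(ε, F) = 1/2 − Rad(F) for ε uniform on {−1,+1}^n; consequently the function φ(y) = d_H(y,F) + Rad(F) is stable and satisfies E_ε φ(ε) = 1/2, and hence there exists a randomized binary prediction algorithm A with μ_A(y) ≤ d_H(y,F) + Rad(F) for every y ∈ {−1,+1}^n. -/

import Mathlib

open Finset

noncomputable section

/-- The real ±1 value of a Boolean bit (`true ↦ +1`, `false ↦ -1`). -/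
def sgn (b : Bool) : ℝ := if b then 1 else -1

/-- The history (prefix) of the sequence `y` strictly before time `t`. -/
def pref {n : ℕ} (y : Fin n → Bool) (t : Fin n) : Fin t.1 → Bool :=
  fun s => y ⟨s.1, s.2.trans t.2⟩

/-- Expected proportion of mistakes `μ_A(y)` of the randomized algorithm whose prediction at
round `t` is a ±1 random variable with mean `q t (pref y t) ∈ [-1,1]`. -/
def mistakes (n : ℕ) (q : (t : Fin n) → (Fin t.1 → Bool) → ℝ) (y : Fin n → Bool) : ℝ :=
  (1 / n) * ∑ t : Fin n, (1 - sgn (y t) * q t (pref y t)) / 2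

/-- Expectation of `φ` under the uniform distribution on `{−1,+1}^n`
(sign sequences encoded as Boolean sequences). -/
def unifExp (n : ℕ) (φ : (Fin n → Bool) → ℝ) : ℝ :=
  (∑ y : Fin n → Bool, φ y) / 2 ^ n

/-- `φ` is stable: flipping any single coordinate changes its value by at most `1/n`. -/
def Stable (n : ℕ) (φ : (Fin n → Bool) → ℝ) : Prop :=
  ∀ (y : Fin n → Bool) (t : Fin n),
    |φ (Function.update y t true) - φ (Function.update y t false)| ≤ 1 / n

/-- Normalized Hamming distance from `y` to a nonempty finite set `F ⊆ {−1,+1}^n`. -/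
def dHam {n : ℕ} (F : Finset (Fin n → Bool)) (hF : F.Nonempty) (y : Fin n → Bool) : ℝ :=
  F.inf' hF fun w => (∑ t : Fin n, if w t ≠ y t then (1 : ℝ) else 0) / n

/-- Rademacher averages `Rad(F) = (1/(2n)) E_ε max_{w∈F} ⟨ε,w⟩` of a nonempty `F ⊆ {−1,+1}^n`. -/
def rad {n : ℕ} (F : Finset (Fin n → Bool)) (hF : F.Nonempty) : ℝ :=
  (unifExp n fun ε => F.sup' hF fun w => ∑ t : Fin n, sgn (w t) * sgn (ε t)) / (2 * n)

namespace Aux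

variable {n : ℕ}

/-- Merge: first `m` coordinates from `y`, rest from `z`. -/
def merge (m : ℕ) (y z : Fin n → Bool) : Fin n → Bool :=
  fun s => if s.1 < m then y s else z s

/-- Partial (conditional-expectation) potentials. -/
def W (n : ℕ) (φ : (Fin n → Bool) → ℝ) (m : ℕ) (y : Fin n → Bool) : ℝ :=
  (∑ z : Fin n → Bool, φ (merge m y z)) / 2 ^ n

lemma card_cube : (Fintype.card (Fin n → Bool) : ℝ) = 2 ^ n := by
  simp [Fintype.card_fun]

lemma W_zero (φ : (Fin n → Bool) → ℝ) (y : Fin n → Bool) :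
    W n φ 0 y = unifExp n φ := by
  have : ∀ z : Fin n → Bool, merge 0 y z = z := by
    intro z; funext s; simp [merge]
  simp [W, unifExp, this]

lemma W_top (φ : (Fin n → Bool) → ℝ) (y : Fin n → Bool) :
    W n φ n y = φ y := by
  have : ∀ z : Fin n → Bool, merge n y z = y := by
    intro z; funext s; simp [merge, s.2]
  have h2 : (0:ℝ) < 2 ^ n := by positivity
  simp only [W, this, Finset.sum_const, nsmul_eq_mul, Finset.card_univ]
  rw [card_cube]
  field_simp

lemma W_congr (φ : (Fin n → Bool) → ℝ) (m : ℕ) {y₁ y₂ : Fin n → Bool}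
    (h : ∀ s : Fin n, s.1 < m → y₁ s = y₂ s) : W n φ m y₁ = W n φ m y₂ := by
  unfold W
  congr 1
  refine Finset.sum_congr rfl fun z _ => ?_
  congr 1
  funext s
  simp only [merge]
  split
  · exact h s ‹_›
  · rfl

lemma merge_update_left (t : Fin n) (y z : Fin n → Bool) (b : Bool) :
    merge (t.1 + 1) (Function.update y t b) z
      = Function.update (merge (t.1 + 1) y z) t b := by
  funext s
  by_cases hs : s = t
  · subst hs; simp [merge, Function.update_self]
  · simp only [Function.update_of_ne hs, merge]

lemma merge_update_right (m : ℕ) (t : Fin n) (ht : t.1 < m) (y z : Fin n → Bool) (b : Bool) :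
    merge m y (Function.update z t b) = merge m y z := by
  funext s
  by_cases hs : s = t
  · subst hs; simp [merge, ht]
  · simp only [merge, Function.update_of_ne hs]

lemma merge_split (t : Fin n) (y z : Fin n → Bool) :
    merge t.1 y z = merge (t.1 + 1) (Function.update y t (z t)) z := by
  funext s
  by_cases hs : s = t
  · subst hs
    simp [merge, Function.update_self]
  · have hst : s.1 ≠ t.1 := fun h => hs (Fin.ext h)
    simp only [merge, Function.update_of_ne hs]
    rcases lt_trichotomy s.1 t.1 with h | h | h
    · rw [if_pos h, if_pos (h.trans (Nat.lt_succ_self _))]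
    · exact absurd h hst
    · rw [if_neg (by omega), if_neg (by omega)]

/-- The flip involution at coordinate `t`. -/
def flip (t : Fin n) : (Fin n → Bool) → (Fin n → Bool) :=
  fun z => Function.update z t (!z t)

lemma flip_involutive (t : Fin n) : Function.Involutive (flip t) := by
  intro z
  funext s
  by_cases hs : s = t
  · subst hs; simp [flip, Function.update_self]
  · simp [flip, Function.update_of_ne hs]

lemma W_rec (φ : (Fin n → Bool) → ℝ) (t : Fin n) (y : Fin n → Bool) :
    2 * W n φ t.1 y
      = W n φ (t.1 + 1) (Function.update y t true)
        + W n φ (t.1 + 1) (Function.update y t false) := by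
  unfold W
  rw [← add_div, ← Finset.sum_add_distrib]
  have key : ∑ z : Fin n → Bool, φ (merge t.1 y z)
      = ∑ z : Fin n → Bool, φ (merge t.1 y (flip t z)) :=
    (Equiv.sum_comp ((flip_involutive t).toPerm _) (fun z => φ (merge t.1 y z))).symm
  rw [← mul_div_assoc]
  congr 1
  rw [two_mul]
  nth_rewrite 2 [key]
  rw [← Finset.sum_add_distrib]
  refine Finset.sum_congr rfl fun z _ => ?_
  have e1 : merge t.1 y z = merge (t.1 + 1) (Function.update y t (z t)) z :=
    merge_split t y z
  have e2 : merge t.1 y (flip t z) = merge (t.1 + 1) (Function.update y t (!z t)) z := by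
    rw [merge_split t y (flip t z)]
    have hz : flip t z t = !z t := by simp [flip]
    rw [hz]
    exact merge_update_right (t.1 + 1) t (Nat.lt_succ_self _) _ z (!z t)
  rw [e1, e2]
  cases hzt : z t <;> simp [hzt] <;> ring

lemma W_stable (φ : (Fin n → Bool) → ℝ) (hφ : Stable n φ) (t : Fin n) (y : Fin n → Bool) :
    |W n φ (t.1 + 1) (Function.update y t true)
      - W n φ (t.1 + 1) (Function.update y t false)| ≤ 1 / n := by
  unfold W
  rw [div_sub_div_same, ← Finset.sum_sub_distrib]
  have h2 : (0:ℝ) < 2 ^ n := by positivity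
  rw [abs_div, abs_of_pos h2]
  rw [div_le_iff₀ h2]
  calc |∑ z : Fin n → Bool, (φ (merge (t.1+1) (Function.update y t true) z)
          - φ (merge (t.1+1) (Function.update y t false) z))|
      ≤ ∑ z : Fin n → Bool, |φ (merge (t.1+1) (Function.update y t true) z)
          - φ (merge (t.1+1) (Function.update y t false) z)| :=
        Finset.abs_sum_le_sum_abs _ _
    _ ≤ ∑ _z : Fin n → Bool, (1 / n : ℝ) := by
        refine Finset.sum_le_sum fun z _ => ?_
        rw [merge_update_left, merge_update_left]
        exact hφ _ t
    _ = 2 ^ n * (1 / n) := by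
        rw [Finset.sum_const, Finset.card_univ, nsmul_eq_mul, card_cube]
    _ = 1 / n * 2 ^ n := by ring

/-- Extension of a history `h` to a full sequence (garbage beyond `t`). -/
def ext (t : Fin n) (h : Fin t.1 → Bool) : Fin n → Bool :=
  fun s => if hs : s.1 < t.1 then h ⟨s.1, hs⟩ else false

/-- The algorithm's prediction means. -/
def Q (φ : (Fin n → Bool) → ℝ) (t : Fin n) (h : Fin t.1 → Bool) : ℝ :=
  n * (W n φ (t.1 + 1) (Function.update (ext t h) t false)
      - W n φ (t.1 + 1) (Function.update (ext t h) t true))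

lemma Q_bound (φ : (Fin n → Bool) → ℝ) (hφ : Stable n φ) (hn : 1 ≤ n)
    (t : Fin n) (h : Fin t.1 → Bool) : |Q φ t h| ≤ 1 := by
  have hn' : (0:ℝ) < n := by exact_mod_cast hn
  have := W_stable φ hφ t (ext t h)
  rw [abs_sub_comm] at this
  calc |Q φ t h| = n * |W n φ (t.1 + 1) (Function.update (ext t h) t false)
        - W n φ (t.1 + 1) (Function.update (ext t h) t true)| := by
        rw [Q, abs_mul, abs_of_pos hn']
    _ ≤ n * (1 / n) := by exact mul_le_mul_of_nonneg_left this hn'.le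
    _ = 1 := by field_simp

lemma W_ext_pref (φ : (Fin n → Bool) → ℝ) (y : Fin n → Bool) (t : Fin n) (b : Bool) :
    W n φ (t.1 + 1) (Function.update (ext t (pref y t)) t b)
      = W n φ (t.1 + 1) (Function.update y t b) := by
  apply W_congr
  intro s hs
  by_cases hst : s = t
  · subst hst; simp
  · have h1 : s.1 < t.1 := by
      have : s.1 ≠ t.1 := fun h => hst (Fin.ext h)
      omega
    rw [Function.update_of_ne hst, Function.update_of_ne hst]
    simp [ext, h1, pref]

lemma step (φ : (Fin n → Bool) → ℝ) (t : Fin n) (y : Fin n → Bool) :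
    (1 - sgn (y t) * Q φ t (pref y t)) / 2
      = 1 / 2 + n * (W n φ (t.1 + 1) y - W n φ t.1 y) := by
  have hrec := W_rec φ t y
  have hQ : Q φ t (pref y t)
      = n * (W n φ (t.1 + 1) (Function.update y t false)
          - W n φ (t.1 + 1) (Function.update y t true)) := by
    rw [Q, W_ext_pref, W_ext_pref]
  have hy : Function.update y t (y t) = y := Function.update_eq_self t y
  cases hyt : y t
  · have : W n φ (t.1 + 1) y = W n φ (t.1 + 1) (Function.update y t false) := by
      apply W_congr
      intro s _
      by_cases h : s = t
      · subst h; simp [hyt]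
      · simp [Function.update_of_ne h]
    rw [hQ, this]
    simp only [sgn, hyt, Bool.false_eq_true, if_false]
    nlinarith [hrec]
  · have : W n φ (t.1 + 1) y = W n φ (t.1 + 1) (Function.update y t true) := by
      apply W_congr
      intro s _
      by_cases h : s = t
      · subst h; simp [hyt]
      · simp [Function.update_of_ne h]
    rw [hQ, this]
    simp only [sgn, hyt, if_true]
    nlinarith [hrec]

lemma mistakes_eq (φ : (Fin n → Bool) → ℝ) (hn : 1 ≤ n) (y : Fin n → Bool) :
    mistakes n (Q φ) y = 1 / 2 + φ y - unifExp n φ := by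
  have hn' : (0:ℝ) < n := by exact_mod_cast hn
  unfold mistakes
  have hsum : ∑ t : Fin n, (1 - sgn (y t) * Q φ t (pref y t)) / 2
      = ∑ t : Fin n, (1 / 2 + n * (W n φ (t.1 + 1) y - W n φ t.1 y)) :=
    Finset.sum_congr rfl fun t _ => step φ t y
  rw [hsum, Finset.sum_add_distrib, Finset.sum_const, Finset.card_univ, Fintype.card_fin,
    ← Finset.mul_sum]
  have htel : ∑ t : Fin n, (W n φ (t.1 + 1) y - W n φ t.1 y)
      = W n φ n y - W n φ 0 y := by
    rw [Fin.sum_univ_eq_sum_range (fun i => W n φ (i + 1) y - W n φ i y) n]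
    exact Finset.sum_range_sub (fun i => W n φ i y) n
  rw [htel, W_top, W_zero]
  field_simp
  ring

/-- `inf'` of `c - g/d` equals `c - sup' g / d` for `d > 0`. -/
lemma inf'_const_sub_div {F : Finset (Fin n → Bool)} (hF : F.Nonempty)
    (g : (Fin n → Bool) → ℝ) (c d : ℝ) (hd : 0 < d) :
    (F.inf' hF fun w => c - g w / d) = c - F.sup' hF g / d := by
  obtain ⟨w0, hw0, hval⟩ := F.exists_mem_eq_sup' hF g
  apply le_antisymm
  · calc F.inf' hF (fun w => c - g w / d) ≤ c - g w0 / d := Finset.inf'_le _ hw0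
      _ = c - F.sup' hF g / d := by rw [← hval]
  · refine Finset.le_inf' hF _ fun w hw => ?_
    have := Finset.le_sup' g hw
    gcongr

lemma abs_inf'_sub_inf'_le {F : Finset (Fin n → Bool)} (hF : F.Nonempty)
    (g₁ g₂ : (Fin n → Bool) → ℝ) (c : ℝ) (hc : 0 ≤ c)
    (h : ∀ w ∈ F, |g₁ w - g₂ w| ≤ c) :
    |F.inf' hF g₁ - F.inf' hF g₂| ≤ c := by
  rw [abs_le]
  obtain ⟨w1, hw1, hv1⟩ := F.exists_mem_eq_inf' hF g₁
  obtain ⟨w2, hw2, hv2⟩ := F.exists_mem_eq_inf' hF g₂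
  constructor
  · have h1 : F.inf' hF g₂ ≤ g₂ w1 := Finset.inf'_le _ hw1
    have h2 : -c ≤ g₁ w1 - g₂ w1 := (abs_le.mp (h w1 hw1)).1
    rw [hv1]; linarith
  · have h1 : F.inf' hF g₁ ≤ g₁ w2 := Finset.inf'_le _ hw2
    have h2 : g₁ w2 - g₂ w2 ≤ c := (abs_le.mp (h w2 hw2)).2
    rw [hv2]; linarith

lemma unifExp_add_const (c : ℝ) (f : (Fin n → Bool) → ℝ) :
    unifExp n (fun y => f y + c) = unifExp n f + c := by
  have h2 : (0:ℝ) < 2 ^ n := by positivity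
  unfold unifExp
  rw [Finset.sum_add_distrib, Finset.sum_const, Finset.card_univ, nsmul_eq_mul, card_cube]
  have h2' : (2:ℝ) ^ n ≠ 0 := ne_of_gt h2
  field_simp

lemma unifExp_const_sub_div (c d : ℝ) (hd : d ≠ 0) (f : (Fin n → Bool) → ℝ) :
    unifExp n (fun y => c - f y / d) = c - unifExp n f / d := by
  have h2 : (2:ℝ) ^ n ≠ 0 := by positivity
  unfold unifExp
  rw [Finset.sum_sub_distrib, Finset.sum_const, Finset.card_univ, nsmul_eq_mul, card_cube,
    ← Finset.sum_div]
  field_simp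

/-- `dHam` in terms of correlations. -/
lemma dHam_eq (hn : 1 ≤ n) (F : Finset (Fin n → Bool)) (hF : F.Nonempty) (y : Fin n → Bool) :
    dHam F hF y
      = 1 / 2 - (F.sup' hF fun w => ∑ t : Fin n, sgn (w t) * sgn (y t)) / (2 * n) := by
  have hn' : (0:ℝ) < n := by exact_mod_cast hn
  have hrw : ∀ w : Fin n → Bool,
      (∑ t : Fin n, if w t ≠ y t then (1 : ℝ) else 0) / n
        = 1 / 2 - (∑ t : Fin n, sgn (w t) * sgn (y t)) / (2 * n) := by
    intro w
    have hpt : ∀ t : Fin n, (if w t ≠ y t then (1 : ℝ) else 0)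
        = (1 - sgn (w t) * sgn (y t)) / 2 := by
      intro t
      cases hwt : w t <;> cases hyt : y t <;> simp [sgn] <;> norm_num
    rw [Finset.sum_congr rfl fun t _ => hpt t]
    have hss : ∑ i : Fin n, (1 - sgn (w i) * sgn (y i)) / 2
        = ((n : ℝ) - ∑ i : Fin n, sgn (w i) * sgn (y i)) / 2 := by
      rw [← Finset.sum_div, Finset.sum_sub_distrib, Finset.sum_const, Finset.card_univ,
        Fintype.card_fin, nsmul_eq_mul, mul_one]
    rw [hss]
    field_simp
  unfold dHam
  rw [Finset.inf'_congr hF rfl fun w _ => hrw w]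
  exact inf'_const_sub_div hF _ (1/2) (2*n) (by positivity)

end Aux

/-- `E_ε d_H(ε,F) = 1/2 − Rad(F)`; hence `φ = d_H(·,F) + Rad(F)` is stable with
`E_ε φ(ε) = 1/2`, and there is a randomized binary prediction algorithm with
`μ_A(y) ≤ d_H(y,F) + Rad(F)` for every sequence `y`. -/
theorem hamming_phi (n : ℕ) (hn : 1 ≤ n) (F : Finset (Fin n → Bool)) (hF : F.Nonempty) :
    unifExp n (fun ε => dHam F hF ε) = 1 / 2 - rad F hF ∧
    Stable n (fun y => dHam F hF y + rad F hF) ∧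
    unifExp n (fun y => dHam F hF y + rad F hF) = 1 / 2 ∧
    ∃ q : (t : Fin n) → (Fin t.1 → Bool) → ℝ,
      (∀ (t : Fin n) (h : Fin t.1 → Bool), |q t h| ≤ 1) ∧
      ∀ y : Fin n → Bool, mistakes n q y ≤ dHam F hF y + rad F hF := by
  have hn' : (0:ℝ) < n := by exact_mod_cast hn
  have h2n : (0:ℝ) < 2 * n := by positivity
  set M : (Fin n → Bool) → ℝ := fun ε => F.sup' hF fun w => ∑ t : Fin n, sgn (w t) * sgn (ε t)
    with hM
  -- Part 1
  have part1 : unifExp n (fun ε => dHam F hF ε) = 1 / 2 - rad F hF := by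
    have hd : ∀ ε : Fin n → Bool, dHam F hF ε = 1 / 2 - M ε / (2 * n) := fun ε =>
      Aux.dHam_eq hn F hF ε
    simp only [hd]
    rw [Aux.unifExp_const_sub_div (1/2) (2*n) (ne_of_gt h2n) M]
    rfl
  -- Part 2
  have part2 : Stable n (fun y => dHam F hF y + rad F hF) := by
    intro y t
    have key : ∀ w ∈ F,
        |(∑ s : Fin n, if w s ≠ Function.update y t true s then (1:ℝ) else 0) / n
          - (∑ s : Fin n, if w s ≠ Function.update y t false s then (1:ℝ) else 0) / n|
        ≤ 1 / n := by
      intro w _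
      rw [div_sub_div_same, abs_div, abs_of_pos hn', ← Finset.sum_sub_distrib]
      gcongr
      have hz : ∀ s ∈ (Finset.univ : Finset (Fin n)), s ≠ t →
          ((if w s ≠ Function.update y t true s then (1:ℝ) else 0)
            - (if w s ≠ Function.update y t false s then (1:ℝ) else 0)) = 0 := by
        intro s _ hst
        rw [Function.update_of_ne hst, Function.update_of_ne hst, sub_self]
      rw [Finset.sum_eq_single_of_mem t (Finset.mem_univ t) hz]
      rw [Function.update_self, Function.update_self]
      cases hwt : w t <;> norm_num
    have := Aux.abs_inf'_sub_inf'_le hF _ _ (1 / n) (by positivity) key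
    simpa [dHam] using this
  -- Part 3
  have part3 : unifExp n (fun y => dHam F hF y + rad F hF) = 1 / 2 := by
    rw [Aux.unifExp_add_const, part1]; ring
  refine ⟨part1, part2, part3, Aux.Q (fun y => dHam F hF y + rad F hF), ?_, ?_⟩
  · intro t h
    exact Aux.Q_bound _ part2 hn t h
  · intro y
    rw [Aux.mistakes_eq _ hn y, part3]
    ring_nf
    exact le_refl _
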